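/- Define the forward-backward envelope F_{1/L}(x) := f(x) + ⟨∇f(x), x⁺ − x⟩ + (L/2)‖x⁺ − x‖² + g(x⁺), where x⁺ := prox_{g/L}(x − (1/L)∇f(x)). Then for every x ∈ ℝ^d and every x* ∈ 𝒳*, F_{1/L}(x) − F* ≤ 2L ‖x − x*‖². In particular F_{1/L}(x) − F* ≤ 2L · dist(x, 𝒳*)². -/

import Mathlib

noncomputable section

open Metric Set
open scoped RealInnerProductSpace

/-- `E d` is the Euclidean space `ℝ^d`. -/
abbrev E (d : ℕ) : Type := EuclideanSpace ℝ (Fin d)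

lemma descent_lemma {d : ℕ} (f : E d → ℝ) (f' : E d → E d) (L : ℝ)
    (hf' : ∀ x, HasGradientAt f (f' x) x)
    (hlip : ∀ x y, ‖f' x - f' y‖ ≤ L * ‖x - y‖) (x y : E d) :
    f x + ⟪f' x, y - x⟫ - L / 2 * ‖y - x‖ ^ 2 ≤ f y := by
  set v := y - x with hv
  set ψ : ℝ → ℝ := fun t => f (x + t • v) - t * ⟪f' x, v⟫ + L / 2 * t ^ 2 * ‖v‖ ^ 2 with hψ
  have hline : ∀ t : ℝ, HasDerivAt (fun t : ℝ => x + t • v) v t := by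
    intro t
    simpa using ((hasDerivAt_id t).smul_const v).const_add x
  have hder : ∀ t : ℝ, HasDerivAt ψ
      (⟪f' (x + t • v), v⟫ - ⟪f' x, v⟫ + L / 2 * (2 * t) * ‖v‖ ^ 2) t := by
    intro t
    have h1 : HasDerivAt (fun t : ℝ => f (x + t • v)) ⟪f' (x + t • v), v⟫ t := by
      have := (hf' (x + t • v)).hasFDerivAt.comp_hasDerivAt t (hline t)
      simpa [InnerProductSpace.toDual_apply_apply, Function.comp_def] using this
    have h2 : HasDerivAt (fun t : ℝ => t * ⟪f' x, v⟫) ⟪f' x, v⟫ t := by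
      simpa using (hasDerivAt_id t).mul_const (⟪f' x, v⟫)
    have h3 : HasDerivAt (fun t : ℝ => L / 2 * t ^ 2 * ‖v‖ ^ 2) (L / 2 * (2 * t) * ‖v‖ ^ 2) t := by
      have := ((hasDerivAt_pow 2 t).const_mul (L / 2)).mul_const (‖v‖ ^ 2)
      simpa [mul_comm, mul_assoc, mul_left_comm] using this
    exact (h1.sub h2).add h3
  have hmono : MonotoneOn ψ (Icc 0 1) := by
    apply monotoneOn_of_deriv_nonneg (convex_Icc 0 1)
    · exact Continuous.continuousOn (by
        have : Continuous ψ := by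
          have hc : ∀ t : ℝ, ContinuousAt ψ t := fun t => (hder t).continuousAt
          exact continuous_iff_continuousAt.2 hc
        exact this)
    · intro t ht
      exact (hder t).differentiableAt.differentiableWithinAt
    · intro t ht
      rw [(hder t).deriv]
      simp only [interior_Icc, mem_Ioo] at ht
      have hib : ⟪f' (x + t • v) - f' x, v⟫ ≥ -(L * t * ‖v‖ * ‖v‖) := by
        have h1 : |⟪f' (x + t • v) - f' x, v⟫| ≤ ‖f' (x + t • v) - f' x‖ * ‖v‖ :=
          abs_real_inner_le_norm _ _
        have h2 : ‖f' (x + t • v) - f' x‖ ≤ L * (t * ‖v‖) := by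
          have := hlip (x + t • v) x
          simpa [norm_smul, abs_of_pos ht.1, mul_assoc] using this
        nlinarith [neg_abs_le (⟪f' (x + t • v) - f' x, v⟫), norm_nonneg v,
          norm_nonneg (f' (x + t • v) - f' x)]
      have : ⟪f' (x + t • v), v⟫ - ⟪f' x, v⟫ = ⟪f' (x + t • v) - f' x, v⟫ := by
        rw [inner_sub_left]
      rw [this]
      nlinarith [sq_nonneg ‖v‖]
  have h01 := hmono (by norm_num : (0:ℝ) ∈ Icc (0:ℝ) 1) (by norm_num : (1:ℝ) ∈ Icc (0:ℝ) 1)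
    zero_le_one
  simp only [hψ, zero_smul, add_zero, one_smul, zero_mul, zero_pow, one_pow, one_mul,
    mul_zero, sub_zero] at h01
  have hxy : x + v = y := by rw [hv]; abel
  rw [hxy] at h01
  linarith

/-- Forward–backward envelope suboptimality bound.
With `x⁺ = prox x = prox_{g/L}(x − (1/L)∇f(x))` (the minimizer of the proximal
subproblem) and the forward–backward envelope
`F_{1/L}(x) = f(x) + ⟨∇f(x), x⁺ − x⟩ + (L/2)‖x⁺ − x‖² + g(x⁺)`,
one has `F_{1/L}(x) − F* ≤ 2L‖x − x*‖²` for every `x` and every `x* ∈ 𝒳*`, and in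
particular `F_{1/L}(x) − F* ≤ 2L · dist(x, 𝒳*)²`, where `𝒳* = {z | F z = F*}`. -/
theorem stmt_13 {d : ℕ} (f g F : E d → ℝ) (f' prox : E d → E d) (L Fstar : ℝ)
    (hF : ∀ x, F x = f x + g x)
    (hL : 0 < L)
    (hf' : ∀ x, HasGradientAt f (f' x) x)
    (hlip : ∀ x y, ‖f' x - f' y‖ ≤ L * ‖x - y‖)
    (hg : ConvexOn ℝ Set.univ g)
    (hFstar : IsLeast (Set.range F) Fstar)
    (hprox : ∀ x y, g (prox x) + L / 2 * ‖prox x - (x - L⁻¹ • f' x)‖ ^ 2 ≤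
      g y + L / 2 * ‖y - (x - L⁻¹ • f' x)‖ ^ 2) :
    ∀ x : E d,
      (∀ xstar, F xstar = Fstar →
        f x + ⟪f' x, prox x - x⟫ + L / 2 * ‖prox x - x‖ ^ 2 + g (prox x) - Fstar ≤
          2 * L * ‖x - xstar‖ ^ 2) ∧
      f x + ⟪f' x, prox x - x⟫ + L / 2 * ‖prox x - x‖ ^ 2 + g (prox x) - Fstar ≤
        2 * L * (infDist x {z | F z = Fstar}) ^ 2 := by
  intro x
  have hexp : ∀ z : E d, L / 2 * ‖z - (x - L⁻¹ • f' x)‖ ^ 2 =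
      L / 2 * ‖z - x‖ ^ 2 + ⟪f' x, z - x⟫ + L⁻¹ / 2 * ‖f' x‖ ^ 2 := by
    intro z
    have h0 : z - (x - L⁻¹ • f' x) = (z - x) + L⁻¹ • f' x := by abel
    rw [h0, norm_add_sq_real, real_inner_smul_right, norm_smul, real_inner_comm]
    have : ‖(L:ℝ)⁻¹‖ = L⁻¹ := by
      rw [Real.norm_eq_abs, abs_of_pos (inv_pos.2 hL)]
    rw [this, mul_pow]
    field_simp
  have key : ∀ xstar, F xstar = Fstar →
      f x + ⟪f' x, prox x - x⟫ + L / 2 * ‖prox x - x‖ ^ 2 + g (prox x) - Fstar ≤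
        2 * L * ‖x - xstar‖ ^ 2 := by
    intro xstar hxs
    have h1 := hprox x xstar
    rw [hexp (prox x), hexp xstar] at h1
    have h2 := descent_lemma f f' L hf' hlip x xstar
    have h3 : ‖xstar - x‖ = ‖x - xstar‖ := norm_sub_rev _ _
    have h4 : Fstar = f xstar + g xstar := by rw [← hxs, hF]
    have h3' : ‖xstar - x‖ ^ 2 = ‖x - xstar‖ ^ 2 := by rw [h3]
    nlinarith [mul_nonneg hL.le (sq_nonneg ‖x - xstar‖)]
  refine ⟨key, ?_⟩
  set S : Set (E d) := {z | F z = Fstar} with hS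
  have hne : S.Nonempty := by
    obtain ⟨z, hz⟩ := hFstar.1
    exact ⟨z, hz⟩
  set c := f x + ⟪f' x, prox x - x⟫ + L / 2 * ‖prox x - x‖ ^ 2 + g (prox x) - Fstar with hc
  rcases le_or_gt c 0 with hc0 | hc0
  · have := sq_nonneg (infDist x S)
    nlinarith
  · have hd : Real.sqrt (c / (2 * L)) ≤ infDist x S := by
      by_contra hlt
      push_neg at hlt
      obtain ⟨z, hz, hdz⟩ := (infDist_lt_iff hne).1 hlt
      have h1 := key z hz
      have hle : Real.sqrt (c / (2 * L)) ≤ dist x z := by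
        rw [dist_eq_norm]
        calc Real.sqrt (c / (2 * L)) ≤ Real.sqrt (‖x - z‖ ^ 2) := by
              apply Real.sqrt_le_sqrt
              rw [div_le_iff₀ (by linarith)]
              linarith [h1]
          _ = ‖x - z‖ := Real.sqrt_sq (norm_nonneg _)
      linarith
    have h5 : c / (2 * L) ≤ (infDist x S) ^ 2 := by
      have h6 : Real.sqrt (c / (2 * L)) ^ 2 ≤ (infDist x S) ^ 2 := by
        apply pow_le_pow_left₀ (Real.sqrt_nonneg _) hd
      rwa [Real.sq_sqrt (by positivity)] at h6
    rw [div_le_iff₀ (by linarith)] at h5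
    linarith
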